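/- Let U : ℝ → ℝ be continuous and strictly increasing. Then the following are equivalent: (i) there exists a function μ : ℝ × ℝ → ℝ such that for all y, c, d ∈ ℝ, U(y+c) − U(c) = μ(c,d)·(U(y+d) − U(d)); (ii) either there exist A, B ∈ ℝ such that U(x) = A·x + B for all x ∈ ℝ, or there exist A, B, C ∈ ℝ such that U(x) = A + B·exp(C·x) for all x ∈ ℝ. -/

import Mathlib

/-!
Setting `d = 0` and `g = U - U 0`, the hypothesis reads `g (y + c) = g c + m c * g y` with
`m c = μ (c, 0)`. Comparing this with the same identity for `y` and `c` swapped, at `y = 1`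
(where `g 1 ≠ 0` by strict monotonicity), gives `m = 1 + k • g` for a constant `k`, so
`g (x + y) = g x + g y + k * g x * g y`. For `k = 0` this is Cauchy's equation, whose continuous
solutions are linear; for `k ≠ 0` the function `1 + k • g` is a continuous solution of
`h (x + y) = h x * h y`, hence an exponential.
-/

theorem eq_mul_of_continuous_of_map_add {g : ℝ → ℝ} (hc : Continuous g)
    (hadd : ∀ x y, g (x + y) = g x + g y) (x : ℝ) : g x = g 1 * x := by
  simpa [mul_comm] using map_real_smul (AddMonoidHom.mk' g hadd) hc x 1

theorem exists_eq_exp_mul_of_continuous_of_map_add {h : ℝ → ℝ} (hc : Continuous h)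
    (hmul : ∀ x y, h (x + y) = h x * h y) (h0 : h 0 ≠ 0) :
    ∃ C, ∀ x, h x = Real.exp (C * x) := by
  have hne : ∀ x, h x ≠ 0 := fun x hx => h0 <| by simpa [hx] using hmul x (-x)
  have hpos : ∀ x, 0 < h x := fun x => by
    have hsq : h x = h (x / 2) * h (x / 2) := by rw [← hmul, add_halves]
    exact hsq ▸ mul_self_pos.2 (hne _)
  have hlog : ∀ x, Real.log (h x) = Real.log (h 1) * x :=
    eq_mul_of_continuous_of_map_add (hc.log hne) fun x y => by
      rw [hmul, Real.log_mul (hne x) (hne y)]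
  exact ⟨Real.log (h 1), fun x => by rw [← hlog, Real.exp_log (hpos x)]⟩

theorem exists_map_add_eq_add_add_mul {g m : ℝ → ℝ}
    (hshift : ∀ y c, g (y + c) = g c + m c * g y) (hg1 : g 1 ≠ 0) :
    ∃ k, ∀ x y, g (x + y) = g x + g y + k * g x * g y := by
  have hm : ∀ c, m c = 1 + (m 1 - 1) / g 1 * g c := fun c => by
    have hswap := (hshift 1 c).symm.trans (add_comm 1 c ▸ hshift c 1)
    field_simp
    linarith
  exact ⟨(m 1 - 1) / g 1, fun x y => by rw [add_comm, hshift, hm]; ring⟩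

theorem linear_or_exp_of_map_add_eq_add_add_mul {g : ℝ → ℝ} {k : ℝ} (hc : Continuous g)
    (h0 : g 0 = 0) (hg : ∀ x y, g (x + y) = g x + g y + k * g x * g y) :
    (∃ a, ∀ x, g x = a * x) ∨ ∃ B C, ∀ x, g x = B * (Real.exp (C * x) - 1) := by
  rcases eq_or_ne k 0 with rfl | hk
  · exact .inl ⟨g 1, eq_mul_of_continuous_of_map_add hc fun x y => by simpa using hg x y⟩
  · obtain ⟨C, hC⟩ := exists_eq_exp_mul_of_continuous_of_map_add (h := fun x => 1 + k * g x)
      (continuous_const.add (continuous_const.mul hc)) (fun x y => by simp only [hg]; ring)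
      (by simp [h0])
    refine .inr ⟨1 / k, C, fun x => ?_⟩
    rw [← hC]
    field_simp
    ring

/-- Equivalence of items 5 and 4 in the characterization of utility functions:
a continuous strictly increasing `U : ℝ → ℝ` satisfies the functional equation
with `μ` iff it is affine or exponential. -/
theorem stmt_2 (U : ℝ → ℝ) (hU_cont : Continuous U) (hU_mono : StrictMono U) :
    (∃ μ : ℝ × ℝ → ℝ, ∀ y c d : ℝ,
        U (y + c) - U c = μ (c, d) * (U (y + d) - U d)) ↔
    ((∃ A B : ℝ, ∀ x : ℝ, U x = A * x + B) ∨
      (∃ A B C : ℝ, ∀ x : ℝ, U x = A + B * Real.exp (C * x))) := by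
  constructor
  · rintro ⟨μ, hμ⟩
    set g : ℝ → ℝ := fun x => U x - U 0
    have hshift : ∀ y c, g (y + c) = g c + μ (c, 0) * g y := fun y c => by
      linarith [add_zero y ▸ hμ y c 0]
    obtain ⟨k, hk⟩ := exists_map_add_eq_add_add_mul hshift
      (sub_ne_zero.2 (hU_mono.injective.ne one_ne_zero))
    rcases linear_or_exp_of_map_add_eq_add_add_mul (g := g) (hU_cont.sub continuous_const)
      (sub_self _) hk with ⟨a, ha⟩ | ⟨B, C, hBC⟩
    · exact .inl ⟨a, U 0, fun x => by linarith [ha x]⟩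
    · exact .inr ⟨U 0 - B, B, C, fun x => by linarith [hBC x]⟩
  · rintro (⟨A, B, hU⟩ | ⟨A, B, C, hU⟩)
    · exact ⟨fun _ => 1, fun y c d => by simp only [hU]; ring⟩
    · refine ⟨fun p => Real.exp (C * (p.1 - p.2)), fun y c d => ?_⟩
      simp only [hU, mul_add, mul_sub, Real.exp_add, Real.exp_sub]
      field_simp
      ring
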